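/- arXiv:2110.11120 — 2 statements merged into one kernel-verified Lean document; each statement's English description precedes it below -/
import Mathlib

section
/- Let X be a principal 𝕋-bundle and t₀ ∈ X a point with trivial isotropy (λt₀ = t₀ only for λ = 1). Then for each μ ∈ 𝕋, the set F_{t₀,μ} := {a ∈ C₀^𝕋(X) : ‖a‖ ≤ 1 and a(t₀) = μ} is a non-empty, norm-closed, proper face of the closed unit ball of C₀^𝕋(X). -/
/-!
The set is cut out of the equivariant unit ball by `a ↦ a t₀ = μ`, and `μ` is an extreme point
of the closed unit disc of `ℂ`; faces pull back along the linear map `a ↦ a t₀`, so it is a face.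
The substance is non-emptiness. By Urysohn take a bump `ψ ≥ 0` with `ψ t₀ = 1` vanishing on the
compact arc `{λ • t₀ : Re λ ≤ 0}`, which misses `t₀` because the isotropy is trivial. Averaging,
`F t = ∫ ψ (λ • t) λ⁻¹ dλ` is equivariant and `Re (F t₀) > 0`. Rescale `F` so that its value at `t₀`
is `μ` and compose with the radial retraction `z ↦ z / max 1 ‖z‖`, which commutes with rotations.
-/

open scoped ZeroAtInfty

open MeasureTheory Set Metric

noncomputable instance : MeasurableSpace Circle := borel Circle

instance : BorelSpace Circle := ⟨rfl⟩

section RadialRetraction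

variable {E : Type*} [NormedAddCommGroup E] [NormedSpace ℝ E]

noncomputable def radialRetraction (x : E) : E := (max 1 ‖x‖)⁻¹ • x

theorem continuous_radialRetraction : Continuous (radialRetraction : E → E) :=
  ((continuous_const.max continuous_norm).inv₀ fun x =>
    (zero_lt_one.trans_le (le_max_left 1 ‖x‖)).ne').smul continuous_id

theorem radialRetraction_zero : radialRetraction (0 : E) = 0 := smul_zero _

theorem norm_radialRetraction_le (x : E) : ‖radialRetraction x‖ ≤ 1 := by
  have hpos : 0 < max 1 ‖x‖ := zero_lt_one.trans_le (le_max_left _ _)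
  rw [radialRetraction, norm_smul, norm_inv, Real.norm_of_nonneg hpos.le, inv_mul_le_iff₀ hpos,
    mul_one]
  exact le_max_right _ _

theorem radialRetraction_of_norm_le {x : E} (hx : ‖x‖ ≤ 1) : radialRetraction x = x := by
  rw [radialRetraction, max_eq_left hx, inv_one, one_smul]

theorem radialRetraction_smul_of_norm_eq_one {𝕜 : Type*} [NormedField 𝕜] [NormedSpace 𝕜 E]
    [SMulCommClass ℝ 𝕜 E] {c : 𝕜} (hc : ‖c‖ = 1) (x : E) :
    radialRetraction (c • x) = c • radialRetraction x := by
  rw [radialRetraction, radialRetraction, norm_smul, hc, one_mul, smul_comm]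

end RadialRetraction

section Evaluation

variable {X β : Type*} [TopologicalSpace X] [SeminormedAddCommGroup β]

theorem ZeroAtInftyContinuousMap.norm_apply_le (a : C₀(X, β)) (t : X) : ‖a t‖ ≤ ‖a‖ :=
  ZeroAtInftyContinuousMap.norm_toBCF_eq_norm (f := a) ▸ a.toBCF.norm_coe_le_norm t

theorem ZeroAtInftyContinuousMap.continuous_eval_const (t : X) :
    Continuous fun a : C₀(X, β) => a t :=
  ((continuous_apply t).comp BoundedContinuousFunction.continuous_coe).comp
    ZeroAtInftyContinuousMap.isometry_toBCF.continuous

end Evaluation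

theorem IsExtreme.inter_linear_preimage {𝕜 E F : Type*} [Ring 𝕜] [PartialOrder 𝕜]
    [AddRightMono 𝕜] [AddCommGroup E] [Module 𝕜 E] [AddCommGroup F] [Module 𝕜 F]
    {A : Set E} {B C : Set F} (hBC : IsExtreme 𝕜 B C) (f : E →ₗ[𝕜] F) (hAB : MapsTo f A B) :
    IsExtreme 𝕜 A (A ∩ f ⁻¹' C) := by
  refine ⟨inter_subset_left, fun x hx y hy z hz hzxy => ⟨hx, ?_⟩⟩
  have hfz : f z ∈ openSegment 𝕜 (f x) (f y) :=
    image_openSegment 𝕜 f.toAffineMap x y ▸ mem_image_of_mem f hzxy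
  exact hBC.left_mem_of_mem_openSegment (hAB hx) (hAB hy) hz.2 hfz

section Averaging

variable {X : Type*} [MulAction Circle X]

def IsCircleEquivariant (a : X → ℂ) : Prop :=
  ∀ (l : Circle) (t : X), a (l • t) = (l : ℂ) * a t

noncomputable def equivariantAverage (ψ : X → ℝ) (t : X) : ℂ :=
  ∫ l : Circle, ψ (l • t) * ((l⁻¹ : Circle) : ℂ) ∂Measure.haar

theorem isCircleEquivariant_equivariantAverage (ψ : X → ℝ) :
    IsCircleEquivariant (equivariantAverage ψ) := by
  intro m t
  let f : Circle → ℂ := fun l => ψ (l • t) * ((m * l⁻¹ : Circle) : ℂ)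
  calc equivariantAverage ψ (m • t)
      = ∫ l, f (l * m) ∂Measure.haar := by
        simp only [equivariantAverage, f, mul_smul, mul_inv_rev, mul_inv_cancel_left]
    _ = ∫ l, f l ∂Measure.haar := integral_mul_right_eq_self f m
    _ = m * equivariantAverage ψ t := by
        simp only [f, equivariantAverage, ← integral_const_mul, Circle.coe_mul]
        congr with l
        ring

variable [TopologicalSpace X] [ContinuousSMul Circle X] {ψ : X → ℝ}

theorem continuous_equivariantAverage (hψ : Continuous ψ) :
    Continuous (equivariantAverage ψ) := by
  rw [← continuousOn_univ]
  refine continuousOn_integral_of_compact_support isCompact_univ ?_ fun _ _ _ h => (h trivial).elim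
  exact Continuous.continuousOn (by fun_prop)

theorem hasCompactSupport_equivariantAverage [R1Space X] (hψ : HasCompactSupport ψ) :
    HasCompactSupport (equivariantAverage ψ) := by
  refine .intro ((isCompact_univ (X := Circle)).smul_set hψ) fun t ht => ?_
  have hzero : ∀ l : Circle, ψ (l • t) = 0 := fun l => by
    by_contra h
    exact ht ⟨l⁻¹, mem_univ _, l • t, subset_tsupport ψ h, inv_smul_smul l t⟩
  simp [equivariantAverage, hzero]

theorem re_equivariantAverage_pos (hψ : Continuous ψ) (hψ_nonneg : ∀ t, 0 ≤ ψ t) {t₀ : X}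
    (ht₀ : ψ t₀ ≠ 0) (hre : ∀ l : Circle, ψ (l • t₀) ≠ 0 → 0 < (l : ℂ).re) :
    0 < (equivariantAverage ψ t₀).re := by
  have hre_integrand : ∀ l : Circle,
      (ψ (l • t₀) * ((l⁻¹ : Circle) : ℂ)).re = ψ (l • t₀) * (l : ℂ).re := fun l => by simp
  have hint : Integrable (fun l : Circle => ψ (l • t₀) * ((l⁻¹ : Circle) : ℂ)) Measure.haar :=
    (by fun_prop : Continuous _).integrable_of_hasCompactSupport (.of_compactSpace _)
  rw [equivariantAverage, ← RCLike.re_to_complex, ← integral_re hint]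
  simp only [RCLike.re_to_complex, hre_integrand]
  refine (by fun_prop : Continuous _).integral_pos_of_hasCompactSupport_nonneg_nonzero
    (.of_compactSpace _) (fun l => ?_) (x := 1) (by simpa using ht₀)
  by_cases hl : ψ (l • t₀) = 0
  · simp [hl]
  · exact mul_nonneg (hψ_nonneg _) (hre l hl).le

theorem exists_bump_at_trivial_isotropy_point [LocallyCompactSpace X] [T2Space X] {t₀ : X}
    (hfree : ∀ l : Circle, l • t₀ = t₀ → l = 1) :
    ∃ ψ : C(X, ℝ), HasCompactSupport ψ ∧ (∀ t, 0 ≤ ψ t) ∧ ψ t₀ = 1 ∧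
      ∀ l : Circle, ψ (l • t₀) ≠ 0 → 0 < (l : ℂ).re := by
  let K : Set X := (· • t₀) '' {l : Circle | (l : ℂ).re ≤ 0}
  have hK : IsCompact K :=
    (isClosed_le (by fun_prop) continuous_const).isCompact.image (by fun_prop)
  have ht₀K : t₀ ∉ K := by
    rintro ⟨l, hl : (l : ℂ).re ≤ 0, hlt₀⟩
    rw [hfree l hlt₀] at hl
    norm_num at hl
  obtain ⟨ψ, hψ_one, hψ_zero, hψ_supp, hψ_range⟩ := exists_continuous_one_zero_of_isCompact
    isCompact_singleton hK.isClosed (disjoint_singleton_left.mpr ht₀K)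
  refine ⟨ψ, hψ_supp, fun t => (hψ_range t).1, hψ_one rfl, fun l hl => ?_⟩
  by_contra hre
  exact hl (hψ_zero ⟨l, not_lt.mp hre, rfl⟩)

theorem exists_continuous_isCircleEquivariant_ne_zero [LocallyCompactSpace X] [T2Space X]
    {t₀ : X} (hfree : ∀ l : Circle, l • t₀ = t₀ → l = 1) :
    ∃ F : X → ℂ, Continuous F ∧ HasCompactSupport F ∧ IsCircleEquivariant F ∧ F t₀ ≠ 0 := by
  obtain ⟨ψ, hψ_supp, hψ_nonneg, hψ_t₀, hψ_re⟩ := exists_bump_at_trivial_isotropy_point hfree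
  refine ⟨equivariantAverage ψ, continuous_equivariantAverage ψ.continuous,
    hasCompactSupport_equivariantAverage hψ_supp, isCircleEquivariant_equivariantAverage ψ,
    fun h => ?_⟩
  have := re_equivariantAverage_pos ψ.continuous hψ_nonneg (by simp [hψ_t₀]) hψ_re
  simp [h] at this

end Averaging

section Face

variable {X : Type*} [TopologicalSpace X] [MulAction Circle X]

theorem exists_zeroAtInfty_isCircleEquivariant_norm_le_one [ContinuousSMul Circle X]
    [LocallyCompactSpace X] [T2Space X] {t₀ : X} (hfree : ∀ l : Circle, l • t₀ = t₀ → l = 1)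
    {μ : ℂ} (hμ : ‖μ‖ = 1) :
    ∃ a : C₀(X, ℂ), IsCircleEquivariant a ∧ ‖a‖ ≤ 1 ∧ a t₀ = μ := by
  obtain ⟨F, hF_cont, hF_supp, hF_equiv, hF_t₀⟩ :=
    exists_continuous_isCircleEquivariant_ne_zero hfree
  let a : X → ℂ := fun t => radialRetraction (μ / F t₀ * F t)
  have ha_cont : Continuous a := continuous_radialRetraction.comp (by fun_prop)
  have hb_supp : HasCompactSupport fun t => μ / F t₀ * F t := hF_supp.mul_left
  have ha_supp : HasCompactSupport a := hb_supp.comp_left radialRetraction_zero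
  refine ⟨⟨⟨a, ha_cont⟩, ha_supp.is_zero_at_infty⟩, fun l t => ?_, ?_, ?_⟩
  · change radialRetraction _ = _ * radialRetraction _
    rw [hF_equiv, mul_left_comm, ← smul_eq_mul (a := (l : ℂ)),
      radialRetraction_smul_of_norm_eq_one (Circle.norm_coe l), smul_eq_mul]
  · rw [← ZeroAtInftyContinuousMap.norm_toBCF_eq_norm]
    exact (BoundedContinuousFunction.norm_le zero_le_one).mpr fun t => norm_radialRetraction_le _
  · change radialRetraction _ = μ
    rw [div_mul_cancel₀ μ hF_t₀, radialRetraction_of_norm_le hμ.le]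

def equivariantUnitBall (X : Type*) [TopologicalSpace X] [MulAction Circle X] :
    Set C₀(X, ℂ) :=
  {a | IsCircleEquivariant a ∧ ‖a‖ ≤ 1}

def equivariantPeakFace (t₀ : X) (μ : ℂ) : Set C₀(X, ℂ) :=
  {a | IsCircleEquivariant a ∧ ‖a‖ ≤ 1 ∧ a t₀ = μ}

@[simps]
noncomputable def ZeroAtInftyContinuousMap.evalₗ (t : X) : C₀(X, ℂ) →ₗ[ℝ] ℂ where
  toFun a := a t
  map_add' _ _ := rfl
  map_smul' _ _ := rfl

theorem equivariantPeakFace_eq (t₀ : X) (μ : ℂ) :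
    equivariantPeakFace t₀ μ =
      equivariantUnitBall X ∩ ZeroAtInftyContinuousMap.evalₗ t₀ ⁻¹' {μ} := by
  ext a
  simp [equivariantPeakFace, equivariantUnitBall, and_assoc]

theorem isClosed_equivariantUnitBall : IsClosed (equivariantUnitBall X) := by
  have hequiv : IsClosed {a : C₀(X, ℂ) | IsCircleEquivariant a} := by
    simp only [IsCircleEquivariant, ofPred_forall]
    exact isClosed_iInter fun l => isClosed_iInter fun t =>
      isClosed_eq (ZeroAtInftyContinuousMap.continuous_eval_const _)
        (continuous_const.mul (ZeroAtInftyContinuousMap.continuous_eval_const _))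
  exact hequiv.inter (isClosed_le continuous_norm continuous_const)

theorem isClosed_equivariantPeakFace (t₀ : X) (μ : ℂ) : IsClosed (equivariantPeakFace t₀ μ) := by
  rw [equivariantPeakFace_eq]
  exact isClosed_equivariantUnitBall.inter
    (isClosed_singleton.preimage (ZeroAtInftyContinuousMap.continuous_eval_const t₀))

theorem convex_equivariantUnitBall : Convex ℝ (equivariantUnitBall X) := by
  have hequiv : Convex ℝ {a : C₀(X, ℂ) | IsCircleEquivariant a} := by
    intro a ha b hb s r _ _ _ l t
    simp only [ZeroAtInftyContinuousMap.add_apply, ZeroAtInftyContinuousMap.smul_apply,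
      Complex.real_smul, ha l t, hb l t]
    ring
  have hball : Convex ℝ {a : C₀(X, ℂ) | ‖a‖ ≤ 1} := by
    simpa only [closedBall, dist_zero_right] using convex_closedBall (0 : C₀(X, ℂ)) 1
  exact hequiv.inter hball

theorem convex_equivariantPeakFace (t₀ : X) (μ : ℂ) : Convex ℝ (equivariantPeakFace t₀ μ) := by
  rw [equivariantPeakFace_eq]
  exact convex_equivariantUnitBall.inter ((convex_singleton μ).linear_preimage _)

theorem isExtreme_equivariantPeakFace (t₀ : X) {μ : ℂ} (hμ : ‖μ‖ = 1) :
    IsExtreme ℝ (equivariantUnitBall X) (equivariantPeakFace t₀ μ) := by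
  have hμ_extreme : μ ∈ (closedBall (0 : ℂ) 1).extremePoints ℝ :=
    StrictConvexSpace.sphere_subset_extremePoints_closedBall 0 one_ne_zero (by simpa using hμ)
  rw [equivariantPeakFace_eq]
  refine (isExtreme_singleton.2 hμ_extreme).inter_linear_preimage _ fun a ha => ?_
  simpa using (a.norm_apply_le t₀).trans ha.2

theorem equivariantPeakFace_ne_equivariantUnitBall (t₀ : X) {μ : ℂ} (hμ : μ ≠ 0) :
    equivariantPeakFace t₀ μ ≠ equivariantUnitBall X := by
  intro h
  have h0 : (0 : C₀(X, ℂ)) ∈ equivariantUnitBall X := ⟨fun l t => by simp, by simp⟩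
  rw [← h] at h0
  exact hμ h0.2.2.symm

end Face

theorem stmt14 {X : Type*} [TopologicalSpace X] [LocallyCompactSpace X] [T2Space X]
    [MulAction Circle X] [ContinuousSMul Circle X]
    (hfree : ∀ (l : Circle) (t : X), l • t = t → l = 1)
    (t₀ : X) (μ : ℂ) (hμ : ‖μ‖ = 1) :
    ({a : C₀(X, ℂ) | (∀ (l : Circle) (t : X), a (l • t) = (l : ℂ) * a t) ∧
        ‖a‖ ≤ 1 ∧ a t₀ = μ}).Nonempty ∧
    IsClosed {a : C₀(X, ℂ) | (∀ (l : Circle) (t : X), a (l • t) = (l : ℂ) * a t) ∧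
        ‖a‖ ≤ 1 ∧ a t₀ = μ} ∧
    {a : C₀(X, ℂ) | (∀ (l : Circle) (t : X), a (l • t) = (l : ℂ) * a t) ∧ ‖a‖ ≤ 1 ∧ a t₀ = μ}
      ⊆ {a : C₀(X, ℂ) | (∀ (l : Circle) (t : X), a (l • t) = (l : ℂ) * a t) ∧ ‖a‖ ≤ 1} ∧
    {a : C₀(X, ℂ) | (∀ (l : Circle) (t : X), a (l • t) = (l : ℂ) * a t) ∧ ‖a‖ ≤ 1 ∧ a t₀ = μ}
      ≠ {a : C₀(X, ℂ) | (∀ (l : Circle) (t : X), a (l • t) = (l : ℂ) * a t) ∧ ‖a‖ ≤ 1} ∧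
    Convex ℝ {a : C₀(X, ℂ) | (∀ (l : Circle) (t : X), a (l • t) = (l : ℂ) * a t) ∧
        ‖a‖ ≤ 1 ∧ a t₀ = μ} ∧
    ∀ b c : C₀(X, ℂ),
      (∀ (l : Circle) (t : X), b (l • t) = (l : ℂ) * b t) → ‖b‖ ≤ 1 →
      (∀ (l : Circle) (t : X), c (l • t) = (l : ℂ) * c t) → ‖c‖ ≤ 1 →
      ∀ s : ℝ, 0 < s → s < 1 →
        (s • b + (1 - s) • c) ∈ {a : C₀(X, ℂ) |
          (∀ (l : Circle) (t : X), a (l • t) = (l : ℂ) * a t) ∧ ‖a‖ ≤ 1 ∧ a t₀ = μ} →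
        b ∈ {a : C₀(X, ℂ) | (∀ (l : Circle) (t : X), a (l • t) = (l : ℂ) * a t) ∧
          ‖a‖ ≤ 1 ∧ a t₀ = μ} ∧
        c ∈ {a : C₀(X, ℂ) | (∀ (l : Circle) (t : X), a (l • t) = (l : ℂ) * a t) ∧
          ‖a‖ ≤ 1 ∧ a t₀ = μ} := by
  have hface := isExtreme_equivariantPeakFace (X := X) t₀ hμ
  have hμ_ne : μ ≠ 0 := norm_ne_zero_iff.mp (hμ ▸ one_ne_zero)
  refine ⟨exists_zeroAtInfty_isCircleEquivariant_norm_le_one (fun l => hfree l t₀) hμ,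
    isClosed_equivariantPeakFace t₀ μ, hface.subset,
    equivariantPeakFace_ne_equivariantUnitBall t₀ hμ_ne, convex_equivariantPeakFace t₀ μ,
    fun b c hb hb_norm hc hc_norm s hs hs_one hbc => ?_⟩
  have hseg : s • b + (1 - s) • c ∈ openSegment ℝ b c :=
    ⟨s, 1 - s, hs, sub_pos.mpr hs_one, add_sub_cancel s 1, rfl⟩
  exact ⟨hface.left_mem_of_mem_openSegment ⟨hb, hb_norm⟩ ⟨hc, hc_norm⟩ hbc hseg,
    hface.right_mem_of_mem_openSegment ⟨hb, hb_norm⟩ ⟨hc, hc_norm⟩ hbc hseg⟩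
end

section
/- Let X, Y be principal 𝕋-bundles, Δ : S(C₀^𝕋(X)) → S(C₀^𝕋(Y)) a surjective isometry, t₀ ∈ X, and s₀ ∈ Y such that Δ maps F_{t₀,1} := {a ∈ B : a(t₀)=1} onto F_{s₀,1}^Y. If a ∈ S(C₀^𝕋(X)) vanishes on a 𝕋-invariant open neighbourhood U of t₀ and there exists b ∈ F_{t₀,1} with supp(b) ⊆ U (so that a·b̄ = 0 pointwise and ‖a ± b‖ = 1), and if moreover Δ(−F_{t₀,1}) = −Δ(F_{t₀,1}), then Δ(a)(s₀) = 0. -/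
open scoped ZeroAtInfty

/-- `𝕋`-equivariance of a function in `C₀(Z, ℂ)`. -/
def CircleEqv {Z : Type*} [TopologicalSpace Z] [MulAction Circle Z] (a : C₀(Z, ℂ)) : Prop :=
  ∀ (l : Circle) (t : Z), a (l • t) = (l : ℂ) * a t

/-!
Since `a` and `b` have disjoint supports, `a + b` and `b - a` both lie in `F_{t₀,1}`, so
`Δ(a + b)(s₀) = 1` and, by `Δ(-F) = -Δ(F)`, `Δ(a - b)(s₀) = -1`. As `Δ` is an isometry, `Δ a` is at
distance `‖b‖ = 1` from both, so `z = Δ a (s₀)` satisfies `|z - 1| ≤ 1` and `|z + 1| ≤ 1`, which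
by the parallelogram law forces `z = 0`.
-/

theorem eq_zero_of_norm_sub_le_of_norm_add_le {E : Type*} [NormedAddCommGroup E]
    [InnerProductSpace ℝ E] {x u : E} (h₁ : ‖x - u‖ ≤ ‖u‖) (h₂ : ‖x + u‖ ≤ ‖u‖) : x = 0 := by
  have hpar := parallelogram_law_with_norm ℝ x u
  have hsq₁ := pow_le_pow_left₀ (norm_nonneg _) h₁ 2
  have hsq₂ := pow_le_pow_left₀ (norm_nonneg _) h₂ 2
  have hx : ‖x‖ ^ 2 ≤ 0 := by linarith
  simpa using hx

namespace ZeroAtInftyContinuousMap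

variable {α β : Type*} [TopologicalSpace α] [SeminormedAddCommGroup β]

theorem norm_apply_le_s15 (f : C₀(α, β)) (x : α) : ‖f x‖ ≤ ‖f‖ :=
  f.toBCF.norm_coe_le_norm x

theorem norm_le {f : C₀(α, β)} {C : ℝ} (hC : 0 ≤ C) : ‖f‖ ≤ C ↔ ∀ x, ‖f x‖ ≤ C :=
  BoundedContinuousFunction.norm_le hC

theorem norm_add_le_max_of_disjoint {f g : C₀(α, β)} (h : ∀ x, f x = 0 ∨ g x = 0) :
    ‖f + g‖ ≤ max ‖f‖ ‖g‖ := by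
  refine (norm_le (le_max_of_le_left (norm_nonneg f))).2 fun x => ?_
  rcases h x with hf | hg
  · simpa [hf] using le_max_of_le_right (g.norm_apply_le_s15 x)
  · simpa [hg] using le_max_of_le_left (f.norm_apply_le_s15 x)

end ZeroAtInftyContinuousMap

open ZeroAtInftyContinuousMap

section Circle

variable {X : Type*} [TopologicalSpace X] [MulAction Circle X]

theorem CircleEqv.add {a b : C₀(X, ℂ)} (ha : CircleEqv a) (hb : CircleEqv b) :
    CircleEqv (a + b) := fun l t => by
  simp only [coe_add, Pi.add_apply, ha l t, hb l t, mul_add]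

theorem CircleEqv.neg {a : C₀(X, ℂ)} (ha : CircleEqv a) : CircleEqv (-a) := fun l t => by
  simp only [coe_neg, Pi.neg_apply, ha l t, mul_neg]

theorem CircleEqv.sub {a b : C₀(X, ℂ)} (ha : CircleEqv a) (hb : CircleEqv b) :
    CircleEqv (a - b) := by
  simpa only [sub_eq_add_neg] using ha.add hb.neg

/-- The face `F_{t₀,1}` of the unit ball of `C₀^𝕋(X)`. -/
def circleFace (t₀ : X) : Set C₀(X, ℂ) :=
  {a | CircleEqv a ∧ ‖a‖ ≤ 1 ∧ a t₀ = 1}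

theorem norm_eq_one_of_mem_circleFace {t₀ : X} {a : C₀(X, ℂ)} (ha : a ∈ circleFace t₀) :
    ‖a‖ = 1 :=
  le_antisymm ha.2.1 (by simpa [ha.2.2] using a.norm_apply_le_s15 t₀)

theorem add_mem_circleFace {t₀ : X} {a b : C₀(X, ℂ)} (ha : CircleEqv a) (ha1 : ‖a‖ ≤ 1)
    (hdisj : ∀ x, a x = 0 ∨ b x = 0) (hb : b ∈ circleFace t₀) : a + b ∈ circleFace t₀ := by
  obtain ⟨hbE, hb1, hbt₀⟩ := hb
  have hat₀ : a t₀ = 0 := (hdisj t₀).resolve_right (by simp [hbt₀])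
  refine ⟨ha.add hbE, ?_, by simp [hat₀, hbt₀]⟩
  exact (norm_add_le_max_of_disjoint hdisj).trans (max_le ha1 hb1)

end Circle

theorem apply_eq_zero_of_norm_sub_le {Y : Type*} [TopologicalSpace Y] {f g h : C₀(Y, ℂ)}
    {s : Y} (hg : g s = 1) (hh : h s = -1) (hfg : ‖f - g‖ ≤ 1) (hfh : ‖f - h‖ ≤ 1) :
    f s = 0 := by
  refine eq_zero_of_norm_sub_le_of_norm_add_le (u := (1 : ℂ)) ?_ ?_
  · simpa [hg] using ((f - g).norm_apply_le_s15 s).trans hfg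
  · simpa [hh] using ((f - h).norm_apply_le_s15 s).trans hfh

theorem stmt15_general {X Y : Type*} [TopologicalSpace X] [MulAction Circle X]
    [TopologicalSpace Y] [MulAction Circle Y]
    (Δ : C₀(X, ℂ) → C₀(Y, ℂ))
    (hiso : ∀ a b : C₀(X, ℂ), CircleEqv a → ‖a‖ = 1 → CircleEqv b → ‖b‖ = 1 →
      ‖Δ a - Δ b‖ = ‖a - b‖)
    (t₀ : X) (s₀ : Y)
    (hface : Δ '' {a : C₀(X, ℂ) | CircleEqv a ∧ ‖a‖ ≤ 1 ∧ a t₀ = 1} =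
      {b : C₀(Y, ℂ) | CircleEqv b ∧ ‖b‖ ≤ 1 ∧ b s₀ = 1})
    (hneg : Δ '' ((fun a => -a) '' {a : C₀(X, ℂ) | CircleEqv a ∧ ‖a‖ ≤ 1 ∧ a t₀ = 1}) =
      (fun b => -b) '' (Δ '' {a : C₀(X, ℂ) | CircleEqv a ∧ ‖a‖ ≤ 1 ∧ a t₀ = 1}))
    (a : C₀(X, ℂ)) (ha : CircleEqv a) (ha1 : ‖a‖ = 1)
    (U : Set X)
    (haU : ∀ t ∈ U, a t = 0)
    (b : C₀(X, ℂ)) (hb : CircleEqv b ∧ ‖b‖ ≤ 1 ∧ b t₀ = 1)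
    (hbU : ∀ t ∉ U, b t = 0) :
    Δ a s₀ = 0 := by
  change Δ '' circleFace t₀ = circleFace s₀ at hface
  change Δ '' (Neg.neg '' circleFace t₀) = Neg.neg '' (Δ '' circleFace t₀) at hneg
  change b ∈ circleFace t₀ at hb
  have hdisj : ∀ x, a x = 0 ∨ b x = 0 := fun x => by
    by_cases hx : x ∈ U
    exacts [.inl (haU x hx), .inr (hbU x hx)]
  have hab : a + b ∈ circleFace t₀ := add_mem_circleFace ha ha1.le hdisj hb
  have hba : b - a ∈ circleFace t₀ := by
    simpa [neg_add_eq_sub] using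
      add_mem_circleFace ha.neg (by rw [norm_neg, ha1]) (by simpa using hdisj) hb
  have hΔadd : Δ (a + b) s₀ = 1 := (hface ▸ Set.mem_image_of_mem Δ hab).2.2
  have hΔsub : Δ (a - b) s₀ = -1 := by
    obtain ⟨c, hc, hca⟩ : Δ (a - b) ∈ Neg.neg '' (Δ '' circleFace t₀) :=
      hneg ▸ Set.mem_image_of_mem Δ ⟨b - a, hba, neg_sub b a⟩
    rw [hface] at hc
    simp [← hca, hc.2.2]
  have hb1 := norm_eq_one_of_mem_circleFace hb
  refine apply_eq_zero_of_norm_sub_le hΔadd hΔsub ?_ ?_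
  · rw [hiso a (a + b) ha ha1 hab.1 (norm_eq_one_of_mem_circleFace hab), sub_add_cancel_left,
      norm_neg, hb1]
  · have hab1 : ‖a - b‖ = 1 := by rw [norm_sub_rev, norm_eq_one_of_mem_circleFace hba]
    rw [hiso a (a - b) ha ha1 (ha.sub hb.1) hab1, sub_sub_cancel, hb1]

theorem stmt15 {X Y : Type*} [TopologicalSpace X] [LocallyCompactSpace X] [T2Space X]
    [MulAction Circle X] [ContinuousSMul Circle X]
    [TopologicalSpace Y] [LocallyCompactSpace Y] [T2Space Y]
    [MulAction Circle Y] [ContinuousSMul Circle Y]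
    (hfreeX : ∀ (l : Circle) (t : X), l • t = t → l = 1)
    (hfreeY : ∀ (l : Circle) (t : Y), l • t = t → l = 1)
    (Δ : C₀(X, ℂ) → C₀(Y, ℂ))
    (hmaps : ∀ a : C₀(X, ℂ), CircleEqv a → ‖a‖ = 1 → CircleEqv (Δ a) ∧ ‖Δ a‖ = 1)
    (hsurj : ∀ b : C₀(Y, ℂ), CircleEqv b → ‖b‖ = 1 →
      ∃ a : C₀(X, ℂ), CircleEqv a ∧ ‖a‖ = 1 ∧ Δ a = b)
    (hiso : ∀ a b : C₀(X, ℂ), CircleEqv a → ‖a‖ = 1 → CircleEqv b → ‖b‖ = 1 →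
      ‖Δ a - Δ b‖ = ‖a - b‖)
    (t₀ : X) (s₀ : Y)
    (hface : Δ '' {a : C₀(X, ℂ) | CircleEqv a ∧ ‖a‖ ≤ 1 ∧ a t₀ = 1} =
      {b : C₀(Y, ℂ) | CircleEqv b ∧ ‖b‖ ≤ 1 ∧ b s₀ = 1})
    (hneg : Δ '' ((fun a => -a) '' {a : C₀(X, ℂ) | CircleEqv a ∧ ‖a‖ ≤ 1 ∧ a t₀ = 1}) =
      (fun b => -b) '' (Δ '' {a : C₀(X, ℂ) | CircleEqv a ∧ ‖a‖ ≤ 1 ∧ a t₀ = 1}))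
    (a : C₀(X, ℂ)) (ha : CircleEqv a) (ha1 : ‖a‖ = 1)
    (U : Set X) (hU : IsOpen U) (ht₀U : t₀ ∈ U)
    (hUinv : ∀ (l : Circle), ∀ t ∈ U, l • t ∈ U)
    (haU : ∀ t ∈ U, a t = 0)
    (b : C₀(X, ℂ)) (hb : CircleEqv b ∧ ‖b‖ ≤ 1 ∧ b t₀ = 1)
    (hbU : ∀ t ∉ U, b t = 0) :
    Δ a s₀ = 0 :=
  stmt15_general Δ hiso t₀ s₀ hface hneg a ha ha1 U haU b hb hbU
end
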